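/- arXiv:2010.12756 — 2 statements merged into one kernel-verified Lean document; each statement's English description precedes it below -/
import Mathlib

section
/- If A and B are bounded positive operators on a complex Hilbert space, then ‖A + iB‖ ≤ ‖A + B‖, where ‖·‖ is the operator norm. -/
open scoped InnerProductSpace
open ContinuousLinearMap

variable {H : Type*} [NormedAddCommGroup H] [InnerProductSpace ℂ H] [CompleteSpace H]

/-- The numerical radius of a bounded operator. -/
noncomputable def numRadius (T : H →L[ℂ] H) : ℝ :=
  ⨆ x : {x : H // ‖x‖ = 1}, ‖⟪T x.1, x.1⟫_ℂ‖

/-- The absolute value |A| = (A*A)^(1/2). -/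
noncomputable def opAbs (A : H →L[ℂ] H) : H →L[ℂ] H := CFC.sqrt (adjoint A * A)

/-- Real part of the Cartesian decomposition. -/
noncomputable def reP (T : H →L[ℂ] H) : H →L[ℂ] H := (2:ℂ)⁻¹ • (T + adjoint T)

/-- Imaginary part of the Cartesian decomposition. -/
noncomputable def imP (T : H →L[ℂ] H) : H →L[ℂ] H := (2*Complex.I:ℂ)⁻¹ • (T - adjoint T)

/-!
Fix `x` and put `y = (A + c • B) x` with `‖c‖ ≤ 1`. Writing `⟪A x, y⟫ = ⟪√A x, √A y⟫` and likewise
for `B`, the Cauchy–Schwarz inequality in `H` and then in `ℝ²` give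
`‖y‖² ≤ ‖⟪A x, y⟫‖ + ‖⟪B x, y⟫‖ ≤ √⟪(A + B) x, x⟫ √⟪(A + B) y, y⟫ ≤ ‖A + B‖ ‖x‖ ‖y‖`.
-/

theorem ContinuousLinearMap.re_inner_apply_self_le {𝕜 E : Type*} [RCLike 𝕜] [NormedAddCommGroup E]
    [InnerProductSpace 𝕜 E] (T : E →L[𝕜] E) (x : E) :
    RCLike.re ⟪T x, x⟫_𝕜 ≤ ‖T‖ * ‖x‖ ^ 2 :=
  calc RCLike.re ⟪T x, x⟫_𝕜 ≤ ‖T x‖ * ‖x‖ := re_inner_le_norm _ _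
    _ ≤ ‖T‖ * ‖x‖ * ‖x‖ := by gcongr; exact T.le_opNorm x
    _ = ‖T‖ * ‖x‖ ^ 2 := by ring

namespace ContinuousLinearMap.IsPositive

variable {T A B : H →L[ℂ] H}

theorem inner_apply_eq_inner_sqrt (hT : T.IsPositive) (x y : H) :
    ⟪T x, y⟫_ℂ = ⟪CFC.sqrt T x, CFC.sqrt T y⟫_ℂ := by
  have hsqrt : (CFC.sqrt T).IsPositive := (nonneg_iff_isPositive _).1 (CFC.sqrt_nonneg T)
  calc ⟪T x, y⟫_ℂ = ⟪CFC.sqrt T (CFC.sqrt T x), y⟫_ℂ := by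
        rw [← mul_apply_eq_comp,
          CFC.sqrt_mul_sqrt_self T ((nonneg_iff_isPositive T).2 hT)]
    _ = ⟪CFC.sqrt T x, CFC.sqrt T y⟫_ℂ := hsqrt.isSymmetric _ _

theorem norm_sqrt_apply_sq (hT : T.IsPositive) (x : H) :
    ‖CFC.sqrt T x‖ ^ 2 = (⟪T x, x⟫_ℂ).re := by
  rw [hT.inner_apply_eq_inner_sqrt]
  exact (inner_self_eq_norm_sq (𝕜 := ℂ) _).symm

theorem norm_inner_sqrt_le (hT : T.IsPositive) (x y : H) :
    ‖⟪T x, y⟫_ℂ‖ ≤ ‖CFC.sqrt T x‖ * ‖CFC.sqrt T y‖ := by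
  rw [hT.inner_apply_eq_inner_sqrt]
  exact norm_inner_le_norm _ _

theorem norm_inner_add_norm_inner_sq_le (hA : A.IsPositive) (hB : B.IsPositive) (x y : H) :
    (‖⟪A x, y⟫_ℂ‖ + ‖⟪B x, y⟫_ℂ‖) ^ 2 ≤ (⟪(A + B) x, x⟫_ℂ).re * (⟪(A + B) y, y⟫_ℂ).re := by
  have hx : (⟪(A + B) x, x⟫_ℂ).re = ‖CFC.sqrt A x‖ ^ 2 + ‖CFC.sqrt B x‖ ^ 2 := by
    rw [add_apply, inner_add_left, Complex.add_re, hA.norm_sqrt_apply_sq, hB.norm_sqrt_apply_sq]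
  have hy : (⟪(A + B) y, y⟫_ℂ).re = ‖CFC.sqrt A y‖ ^ 2 + ‖CFC.sqrt B y‖ ^ 2 := by
    rw [add_apply, inner_add_left, Complex.add_re, hA.norm_sqrt_apply_sq, hB.norm_sqrt_apply_sq]
  rw [hx, hy]
  have hAxy := hA.norm_inner_sqrt_le x y
  have hBxy := hB.norm_inner_sqrt_le x y
  nlinarith [norm_nonneg ⟪A x, y⟫_ℂ, norm_nonneg ⟪B x, y⟫_ℂ,
    mul_nonneg (norm_nonneg (CFC.sqrt A x)) (norm_nonneg (CFC.sqrt A y)),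
    mul_nonneg (norm_nonneg (CFC.sqrt B x)) (norm_nonneg (CFC.sqrt B y)),
    sq_nonneg (‖CFC.sqrt A x‖ * ‖CFC.sqrt B y‖ - ‖CFC.sqrt B x‖ * ‖CFC.sqrt A y‖)]

theorem norm_add_smul_le_norm_add (hA : A.IsPositive) (hB : B.IsPositive) {c : ℂ}
    (hc : ‖c‖ ≤ 1) : ‖A + c • B‖ ≤ ‖A + B‖ := by
  refine opNorm_le_bound _ (norm_nonneg _) fun x => ?_
  set y := (A + c • B) x
  have hy : ‖y‖ ^ 2 ≤ ‖⟪A x, y⟫_ℂ‖ + ‖⟪B x, y⟫_ℂ‖ :=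
    calc ‖y‖ ^ 2 = ‖⟪(A + c • B) x, y⟫_ℂ‖ := by
          rw [← inner_self_eq_norm_sq (𝕜 := ℂ), inner_self_re_eq_norm]
      _ = ‖⟪A x, y⟫_ℂ + (starRingEnd ℂ) c * ⟪B x, y⟫_ℂ‖ := by
          rw [add_apply, smul_apply, inner_add_left, inner_smul_left]
      _ ≤ ‖⟪A x, y⟫_ℂ‖ + ‖c‖ * ‖⟪B x, y⟫_ℂ‖ := by
          grw [norm_add_le, norm_mul, Complex.norm_conj]
      _ ≤ ‖⟪A x, y⟫_ℂ‖ + ‖⟪B x, y⟫_ℂ‖ := by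
          gcongr; exact mul_le_of_le_one_left (norm_nonneg _) hc
  have hsq : (‖y‖ ^ 2) ^ 2 ≤ (‖A + B‖ * ‖x‖ * ‖y‖) ^ 2 :=
    calc (‖y‖ ^ 2) ^ 2 ≤ (‖⟪A x, y⟫_ℂ‖ + ‖⟪B x, y⟫_ℂ‖) ^ 2 := by gcongr
      _ ≤ (⟪(A + B) x, x⟫_ℂ).re * (⟪(A + B) y, y⟫_ℂ).re :=
          norm_inner_add_norm_inner_sq_le hA hB x y
      _ ≤ (‖A + B‖ * ‖x‖ ^ 2) * (‖A + B‖ * ‖y‖ ^ 2) :=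
          mul_le_mul ((A + B).re_inner_apply_self_le x) ((A + B).re_inner_apply_self_le y)
            ((hA.add hB).re_inner_nonneg_left y) (by positivity)
      _ = (‖A + B‖ * ‖x‖ * ‖y‖) ^ 2 := by ring
  have hy' : ‖y‖ * ‖y‖ ≤ ‖A + B‖ * ‖x‖ * ‖y‖ := by
    rw [← sq]; exact (pow_le_pow_iff_left₀ (by positivity) (by positivity) two_ne_zero).1 hsq
  rcases (norm_nonneg y).eq_or_lt with hy0 | hy0
  · rw [← hy0]; positivity
  · exact le_of_mul_le_mul_right hy' hy0

end ContinuousLinearMap.IsPositive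

theorem stmt_3 (A B : H →L[ℂ] H) (hA : A.IsPositive) (hB : B.IsPositive) :
    ‖A + Complex.I • B‖ ≤ ‖A + B‖ :=
  hA.norm_add_smul_le_norm_add hB (by simp)
end

section
/- If A and B are bounded self-adjoint operators on a complex Hilbert space, then (1/2)‖A² + B²‖ ≤ ω(A + iB)² ≤ ‖A² + B²‖, where ω denotes the numerical radius. -/
/-!
For a unit vector `x` put `a = ⟪A x, x⟫` and `b = ⟪B x, x⟫`; both are real, so
`|⟪(A + iB) x, x⟫|² = a² + b²`. Since `|a| ≤ ‖A x‖` and `|b| ≤ ‖B x‖`, this is at most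
`‖A x‖² + ‖B x‖² = ⟪(A² + B²) x, x⟫ ≤ ‖A² + B²‖`. Conversely it dominates `a²` and `b²`, and the
norm of a self-adjoint operator is the supremum of its quadratic form, so `‖A‖, ‖B‖ ≤ ω(A + iB)`;
then `‖A² + B²‖ ≤ ‖A‖² + ‖B‖² ≤ 2 ω(A + iB)²` by the C*-identity.
-/

open scoped InnerProductSpace
open ContinuousLinearMap

variable {H : Type*} [NormedAddCommGroup H] [InnerProductSpace ℂ H] [CompleteSpace H]

open Complex

lemma norm_inner_apply_self_le_norm_apply {𝕜 E : Type*} [RCLike 𝕜] [NormedAddCommGroup E]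
    [InnerProductSpace 𝕜 E] (T : E →L[𝕜] E) {x : E} (hx : ‖x‖ = 1) :
    ‖⟪T x, x⟫_𝕜‖ ≤ ‖T x‖ := by
  simpa [hx] using norm_inner_le_norm (T x) x

section NumRadius

variable {E : Type*} [NormedAddCommGroup E] [InnerProductSpace ℂ E]

lemma numRadius_nonneg (T : E →L[ℂ] E) : 0 ≤ numRadius T :=
  Real.iSup_nonneg fun _ => norm_nonneg _

lemma norm_inner_apply_self_le_numRadius (T : E →L[ℂ] E) {x : E} (hx : ‖x‖ = 1) :
    ‖⟪T x, x⟫_ℂ‖ ≤ numRadius T := by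
  refine le_ciSup (f := fun x : {x : E // ‖x‖ = 1} => ‖⟪T x.1, x.1⟫_ℂ‖) ⟨‖T‖, ?_⟩ ⟨x, hx⟩
  rintro _ ⟨⟨y, hy⟩, rfl⟩
  exact (norm_inner_apply_self_le_norm_apply T hy).trans (T.unit_le_opNorm y hy.le)

lemma norm_inner_apply_self_le_numRadius_mul (T : E →L[ℂ] E) (x : E) :
    ‖⟪T x, x⟫_ℂ‖ ≤ numRadius T * ‖x‖ ^ 2 := by
  rcases eq_or_ne x 0 with rfl | hx
  · simp
  have hx' : ‖x‖ ≠ 0 := norm_ne_zero_iff.mpr hx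
  have hu : ‖(‖x‖⁻¹ : ℂ) • x‖ = 1 := by simp [norm_smul, hx']
  have := norm_inner_apply_self_le_numRadius T hu
  simp only [map_smul, inner_smul_left, inner_smul_right, norm_mul, norm_inv, Complex.norm_real,
    RCLike.norm_conj, norm_norm] at this
  rw [← div_le_iff₀ (by positivity)]
  calc ‖⟪T x, x⟫_ℂ‖ / ‖x‖ ^ 2 = ‖x‖⁻¹ * (‖x‖⁻¹ * ‖⟪T x, x⟫_ℂ‖) := by ring
    _ ≤ numRadius T := this

lemma numRadius_sq_le {T : E →L[ℂ] E} {c : ℝ} (hc : 0 ≤ c)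
    (h : ∀ x : E, ‖x‖ = 1 → ‖⟪T x, x⟫_ℂ‖ ^ 2 ≤ c) : numRadius T ^ 2 ≤ c := by
  have : numRadius T ≤ √c :=
    Real.iSup_le (fun x => Real.le_sqrt_of_sq_le (h x.1 x.2)) (Real.sqrt_nonneg c)
  exact (Real.le_sqrt (numRadius_nonneg T) hc).mp this

end NumRadius

lemma IsSelfAdjoint.norm_le_numRadius_of_abs_re_inner_le {S : H →L[ℂ] H} (hS : IsSelfAdjoint S)
    (T : H →L[ℂ] H) (h : ∀ x : H, |re ⟪S x, x⟫_ℂ| ≤ ‖⟪T x, x⟫_ℂ‖) : ‖S‖ ≤ numRadius T := by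
  rw [S.norm_eq_iSup_rayleighQuotient hS.isSymmetric]
  refine ciSup_le fun x => ?_
  rw [rayleighQuotient, reApplyInnerSelf_apply, abs_div, abs_sq]
  exact div_le_of_le_mul₀ (sq_nonneg _) (numRadius_nonneg T)
    ((h x).trans (norm_inner_apply_self_le_numRadius_mul T x))

lemma IsSelfAdjoint.norm_apply_sq {A : H →L[ℂ] H} (hA : IsSelfAdjoint A) (x : H) :
    ‖A x‖ ^ 2 = re ⟪(A ^ 2) x, x⟫_ℂ := by
  rw [pow_two A, mul_apply_eq_comp, show ⟪A (A x), x⟫_ℂ = ⟪A x, A x⟫_ℂ from hA.isSymmetric (A x) x]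
  exact (inner_self_eq_norm_sq (𝕜 := ℂ) (A x)).symm

lemma norm_sq_inner_add_I_smul_apply_self {A B : H →L[ℂ] H} (hA : IsSelfAdjoint A)
    (hB : IsSelfAdjoint B) (x : H) :
    ‖⟪(A + I • B) x, x⟫_ℂ‖ ^ 2 = re ⟪A x, x⟫_ℂ ^ 2 + re ⟪B x, x⟫_ℂ ^ 2 := by
  rw [add_apply, _root_.smul_apply, inner_add_left, inner_smul_left,
    ← hA.isSymmetric.coe_reApplyInnerSelf_apply, ← hB.isSymmetric.coe_reApplyInnerSelf_apply,
    Complex.sq_norm, normSq_apply]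
  simp [reApplyInnerSelf_apply]
  ring

theorem stmt_4 (A B : H →L[ℂ] H) (hA : IsSelfAdjoint A) (hB : IsSelfAdjoint B) :
    (1/2) * ‖A ^ 2 + B ^ 2‖ ≤ numRadius (A + Complex.I • B) ^ 2 ∧
      numRadius (A + Complex.I • B) ^ 2 ≤ ‖A ^ 2 + B ^ 2‖ := by
  have hT := norm_sq_inner_add_I_smul_apply_self hA hB
  have hA_le : ‖A‖ ≤ numRadius (A + I • B) :=
    hA.norm_le_numRadius_of_abs_re_inner_le _ fun x => abs_le_of_sq_le_sq
      (by rw [hT x]; exact le_add_of_nonneg_right (sq_nonneg _)) (norm_nonneg _)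
  have hB_le : ‖B‖ ≤ numRadius (A + I • B) :=
    hB.norm_le_numRadius_of_abs_re_inner_le _ fun x => abs_le_of_sq_le_sq
      (by rw [hT x]; exact le_add_of_nonneg_left (sq_nonneg _)) (norm_nonneg _)
  have hA2 : ‖A ^ 2‖ = ‖A‖ ^ 2 := by simpa using hA.norm_pow_two_pow 1
  have hB2 : ‖B ^ 2‖ = ‖B‖ ^ 2 := by simpa using hB.norm_pow_two_pow 1
  constructor
  · calc (1/2) * ‖A ^ 2 + B ^ 2‖ ≤ (1/2) * (‖A‖ ^ 2 + ‖B‖ ^ 2) := by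
          gcongr
          exact hA2 ▸ hB2 ▸ norm_add_le (A ^ 2) (B ^ 2)
      _ ≤ numRadius (A + I • B) ^ 2 := by
          nlinarith [pow_le_pow_left₀ (norm_nonneg A) hA_le 2,
            pow_le_pow_left₀ (norm_nonneg B) hB_le 2]
  · refine numRadius_sq_le (norm_nonneg _) fun x hx => ?_
    have hre (S : H →L[ℂ] H) : |re ⟪S x, x⟫_ℂ| ≤ ‖S x‖ :=
      (abs_re_le_norm _).trans (norm_inner_apply_self_le_norm_apply S hx)
    have hre_sq (S : H →L[ℂ] H) : re ⟪S x, x⟫_ℂ ^ 2 ≤ ‖S x‖ ^ 2 :=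
      sq_le_sq.mpr ((hre S).trans_eq (abs_norm _).symm)
    calc ‖⟪(A + I • B) x, x⟫_ℂ‖ ^ 2 = re ⟪A x, x⟫_ℂ ^ 2 + re ⟪B x, x⟫_ℂ ^ 2 := hT x
      _ ≤ ‖A x‖ ^ 2 + ‖B x‖ ^ 2 := add_le_add (hre_sq A) (hre_sq B)
      _ = re ⟪(A ^ 2 + B ^ 2) x, x⟫_ℂ := by
          rw [hA.norm_apply_sq, hB.norm_apply_sq, add_apply, inner_add_left, add_re]
      _ ≤ ‖A ^ 2 + B ^ 2‖ :=
          (le_abs_self _).trans ((hre _).trans ((A ^ 2 + B ^ 2).unit_le_opNorm x hx.le))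
end
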